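/- arXiv:0911.0286 — 2 statements merged into one kernel-verified Lean document; each statement's English description precedes it below -/
import Mathlib

section
/- Let F(x) ∈ 𝓞[x] be a monic irreducible polynomial of degree n with root θ ∈ K̄, of depth r ≥ 1, and let [F_1, …, F_r] be an Okutsu frame of F. Then F_1(x) is irreducible modulo 𝔪, m_1 divides n, and F(x) ≡ F_1(x)^{n/m_1} (mod 𝔪). -/
open Polynomial

noncomputable section

/-- A local field `K` of characteristic zero, presented through the canonical extension `v`
of its normalized discrete valuation (additively written, `v(K*) = ℤ`) to a fixed algebraic
closure of `K`.  The axioms state that `v` is an additive valuation on the algebraic closure,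
that its restriction to `K` is a surjective discrete valuation onto `ℤ` (plus `⊤` at `0`),
that it is invariant under `K`-automorphisms (a property of the canonical extension), that
`K` is complete and that its residue field is finite. -/
structure OkutsuSetup (K : Type) [Field K] [CharZero K] : Type where
  v : AlgebraicClosure K → WithTop ℚ
  v_eq_top_iff : ∀ x, v x = ⊤ ↔ x = 0
  v_mul : ∀ x y, v (x * y) = v x + v y
  v_min_le_add : ∀ x y, min (v x) (v y) ≤ v (x + y)
  v_neg : ∀ x, v (-x) = v x
  v_one : v 1 = 0
  v_base_int : ∀ x : K, x ≠ 0 →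
    ∃ k : ℤ, v (algebraMap K (AlgebraicClosure K) x) = ((k : ℚ) : WithTop ℚ)
  v_base_one : ∃ x : K, v (algebraMap K (AlgebraicClosure K) x) = ((1 : ℚ) : WithTop ℚ)
  v_aut_invariant : ∀ (M : IntermediateField K (AlgebraicClosure K)) (σ : ↥M ≃ₐ[K] ↥M)
    (x : ↥M), v ((σ x : ↥M) : AlgebraicClosure K) = v ((x : ↥M) : AlgebraicClosure K)
  complete : ∀ a : ℕ → K,
    (∀ N : ℚ, ∃ M : ℕ, ∀ p q : ℕ, M ≤ p → M ≤ q →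
      ((N : ℚ) : WithTop ℚ) < v (algebraMap K (AlgebraicClosure K) (a p - a q))) →
    ∃ b : K, ∀ N : ℚ, ∃ M : ℕ, ∀ p : ℕ, M ≤ p →
      ((N : ℚ) : WithTop ℚ) < v (algebraMap K (AlgebraicClosure K) (a p - b))
  finite_residue : ∃ T : Finset K, ∀ x : K,
    0 ≤ v (algebraMap K (AlgebraicClosure K) x) →
    ∃ y ∈ T, 0 < v (algebraMap K (AlgebraicClosure K) (x - y))

namespace OkutsuSetup

variable {K : Type} [Field K] [CharZero K]

/-- The valuation of `K` itself. -/
def vK (S : OkutsuSetup K) (x : K) : WithTop ℚ :=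
  S.v (algebraMap K (AlgebraicClosure K) x)

/-- The ring of integers `𝓞` of `K`. -/
def integers (S : OkutsuSetup K) : Subring K where
  carrier := {x : K | 0 ≤ S.vK x}
  zero_mem' := by
    show (0 : WithTop ℚ) ≤ S.vK 0
    unfold vK
    rw [map_zero, (S.v_eq_top_iff 0).mpr rfl]
    exact le_top
  one_mem' := by
    show (0 : WithTop ℚ) ≤ S.vK 1
    unfold vK
    rw [map_one, S.v_one]
  add_mem' := by
    intro a b ha hb
    show (0 : WithTop ℚ) ≤ S.vK (a + b)
    unfold vK
    rw [map_add]
    exact le_trans (le_min ha hb) (S.v_min_le_add _ _)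
  mul_mem' := by
    intro a b ha hb
    show (0 : WithTop ℚ) ≤ S.vK (a * b)
    unfold vK
    rw [map_mul, S.v_mul]
    exact add_nonneg ha hb
  neg_mem' := by
    intro a ha
    show (0 : WithTop ℚ) ≤ S.vK (-a)
    unfold vK
    rw [map_neg, S.v_neg]
    exact ha

/-- The maximal ideal `𝔪` of the ring of integers of `K`. -/
def maximalIdeal (S : OkutsuSetup K) : Ideal S.integers where
  carrier := {x : S.integers | 0 < S.vK (x : K)}
  zero_mem' := by
    show (0 : WithTop ℚ) < S.vK ((0 : S.integers) : K)
    have h0 : ((0 : S.integers) : K) = (0 : K) := rfl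
    rw [h0]
    unfold vK
    rw [map_zero, (S.v_eq_top_iff 0).mpr rfl]
    exact WithTop.coe_lt_top 0
  add_mem' := by
    intro a b ha hb
    show (0 : WithTop ℚ) < S.vK ((a : K) + (b : K))
    refine lt_of_lt_of_le (lt_min ha hb) ?_
    unfold vK
    rw [map_add]
    exact S.v_min_le_add _ _
  smul_mem' := by
    intro c x hx
    show (0 : WithTop ℚ) < S.vK ((c : K) * (x : K))
    unfold vK
    rw [map_mul, S.v_mul]
    calc (0 : WithTop ℚ) < S.v (algebraMap K (AlgebraicClosure K) (x : K)) := hx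
    _ ≤ _ + _ := le_add_of_nonneg_left c.2

/-- The residue field `𝓞/𝔪` of `K`. -/
abbrev Residue (S : OkutsuSetup K) : Type :=
  S.integers ⧸ S.maximalIdeal

/-- The residue characteristic of `K`. -/
def resChar (S : OkutsuSetup K) : ℕ :=
  ringChar S.Residue

/-- Reduction of a polynomial with integer coefficients modulo `𝔪`. -/
def reduce (S : OkutsuSetup K) (F : Polynomial S.integers) : Polynomial S.Residue :=
  F.map (Ideal.Quotient.mk S.maximalIdeal)

/-- Evaluation of a polynomial with coefficients in `𝓞` at a point of the algebraic
closure of `K`. -/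
def evalK (S : OkutsuSetup K) (F : Polynomial S.integers) (θ : AlgebraicClosure K) :
    AlgebraicClosure K :=
  Polynomial.aeval θ (F.map S.integers.subtype)

/-- `v(g)` for a polynomial `g`: the minimum of the valuations of its coefficients. -/
def vPoly (S : OkutsuSetup K) (g : Polynomial S.integers) : WithTop ℚ :=
  (Finset.range (g.natDegree + 1)).inf fun i => S.vK ((g.coeff i : K))

/-- The ramification index `e(E/K)` of a finite subextension `E` of `K̄/K`: the least
positive integer `e` such that all values of `v` on `E*` lie in `(1/e)ℤ`. -/
def ramIdx (S : OkutsuSetup K) (E : IntermediateField K (AlgebraicClosure K)) : ℕ :=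
  sInf {e : ℕ | 0 < e ∧ ∀ x ∈ E, x ≠ (0 : AlgebraicClosure K) →
    ∃ k : ℤ, S.v x = (((k : ℚ) / (e : ℚ) : ℚ) : WithTop ℚ)}

/-- The residual degree `f(E/K)` of a finite subextension `E` of `K̄/K`; since `K` is a
complete discretely valued field, `[E : K] = e(E/K)·f(E/K)`. -/
def resDeg (S : OkutsuSetup K) (E : IntermediateField K (AlgebraicClosure K)) : ℕ :=
  Module.finrank K E / S.ramIdx E

/-- A subextension `E/K` is tamely ramified when its ramification index is prime to the
residue characteristic of `K`. -/
def IsTame (S : OkutsuSetup K) (E : IntermediateField K (AlgebraicClosure K)) : Prop :=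
  Nat.Coprime (S.ramIdx E) S.resChar

/-- The Okutsu invariants `m_0 = 1 ≤ m_1 < ⋯ < m_r < m_{r+1} = n` and
`μ_0 = 0 < μ_1 < ⋯ < μ_r < μ_{r+1} = ∞` of a monic irreducible polynomial of degree `n`
with root `θ`:  `m i` is the least `[K(η):K]` over `η` with `v(θ-η) > μ (i-1)`, and
`μ i` is the greatest value of `v(θ-η)` over `η` with `[K(η):K] = m i`.
`r` is the depth: the number of indices `i ≥ 1` with `m i < n`. -/
structure OkutsuData (S : OkutsuSetup K) (θ : AlgebraicClosure K) (n : ℕ) : Type where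
  r : ℕ
  m : ℕ → ℕ
  μ : ℕ → WithTop ℚ
  m_zero : m 0 = 1
  mu_zero : μ 0 = 0
  m_isLeast : ∀ i, 1 ≤ i → i ≤ r + 1 →
    IsLeast {d : ℕ | ∃ η : AlgebraicClosure K,
      (minpoly K η).natDegree = d ∧ μ (i - 1) < S.v (θ - η)} (m i)
  mu_isGreatest : ∀ i, 1 ≤ i → i ≤ r + 1 →
    IsGreatest {c : WithTop ℚ | ∃ η : AlgebraicClosure K,
      (minpoly K η).natDegree = m i ∧ S.v (θ - η) = c} (μ i)
  m_lt_n : ∀ i, 1 ≤ i → i ≤ r → m i < n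
  m_last : m (r + 1) = n

/-- `[F_1, …, F_r]` is an Okutsu frame of the monic irreducible polynomial with root `θ`
and Okutsu invariants `D`: for each `1 ≤ i ≤ r`, `F_i` is the minimal polynomial of some
`α_i ∈ K̄` with `[K(α_i):K] = m_i` and `v(θ - α_i) = μ_i`. -/
def IsFrame (S : OkutsuSetup K) {θ : AlgebraicClosure K} {n : ℕ} (D : OkutsuData S θ n)
    (Fr : ℕ → Polynomial S.integers) : Prop :=
  ∀ i, 1 ≤ i → i ≤ D.r → ∃ α : AlgebraicClosure K,
    (minpoly K α).natDegree = D.m i ∧ S.v (θ - α) = D.μ i ∧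
      (Fr i).map S.integers.subtype = minpoly K α

/-- `φ` is a Montes approximation to the monic irreducible polynomial `F`:  a monic
irreducible polynomial of the same degree `n` having a root `α` with `v(θ - α) > μ_r`,
where `θ` is a root of `F`. -/
def IsMontesApprox (S : OkutsuSetup K) (F φ : Polynomial S.integers) : Prop :=
  φ.Monic ∧ Irreducible (φ.map S.integers.subtype) ∧ φ.natDegree = F.natDegree ∧
    ∃ θ : AlgebraicClosure K, S.evalK F θ = 0 ∧
      ∃ D : OkutsuData S θ F.natDegree, ∃ α : AlgebraicClosure K,
        S.evalK φ α = 0 ∧ D.μ D.r < S.v (θ - α)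

end OkutsuSetup

/-!
Let `F₁ = Fr 1` be the minimal polynomial of `α`, where `v(θ - α) = μ₁ > 0`. By minimality of
`m₁`, no `η` with `v(θ - η) > 0` has degree `< m₁`; since roots of monic integral polynomials are
integral, no monic `g ∈ 𝓞[x]` of degree `< m₁` has `v(g(α)) > 0`. A factorization of `F̄₁` into
monic factors of smaller degree lifts to `F₁ ≡ g h (mod 𝔪)`, and evaluating at `α` gives
`v(g(α) h(α)) > 0`; so `F̄₁` is irreducible.

If `q` is a monic irreducible factor of `F̄`, a root `y` of a monic lift of `q` has
`v(F(y)) > 0`, so `y` is close to a conjugate `σθ`, hence to `σα`, and `v(F₁(y)) > 0`.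
A Bézout identity between `q` and `F̄₁` evaluated at `y` would then give `v(1) > 0`; hence
`q = F̄₁`, and `F̄` is a power of `F̄₁`.
-/

open UniqueFactorizationMonoid in
theorem Polynomial.Monic.eq_pow_of_forall_irreducible_dvd {k : Type*} [Field k] {P p : k[X]}
    (hP : P.Monic) (hp : p.Monic)
    (h : ∀ q : k[X], q.Monic → Irreducible q → q ∣ P → q = p) : ∃ a : ℕ, P = p ^ a := by
  classical
  have hfactors : ∀ q ∈ normalizedFactors P, q = p := fun q hq =>
    h q (normalize_normalized_factor q hq ▸
        monic_normalize (irreducible_of_normalized_factor q hq).ne_zero)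
      (irreducible_of_normalized_factor q hq) (dvd_of_mem_normalizedFactors hq)
  refine ⟨(normalizedFactors P).card, eq_of_monic_of_associated hP (hp.pow _) ?_⟩
  rw [← Multiset.prod_replicate, ← Multiset.eq_replicate_card.2 hfactors]
  exact (prod_normalizedFactors hP.ne_zero).symm

theorem Polynomial.natDegree_minpoly_le_of_mem_aroots {K L : Type*} [Field K] [Field L]
    [Algebra K L] {p : K[X]} {x : L} (hx : x ∈ p.aroots L) :
    (minpoly K x).natDegree ≤ p.natDegree :=
  natDegree_le_of_dvd (minpoly.dvd K x (mem_aroots.1 hx).2) (mem_aroots.1 hx).1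

namespace OkutsuSetup

variable {K : Type} [Field K] [CharZero K] (S : OkutsuSetup K)

local notation "Kbar" => AlgebraicClosure K

def val : AddValuation Kbar (WithTop ℚ) :=
  AddValuation.of S.v ((S.v_eq_top_iff 0).2 rfl) S.v_one S.v_min_le_add S.v_mul

lemma val_apply (x : Kbar) : S.val x = S.v x := rfl

lemma v_zero : S.v 0 = ⊤ := (S.v_eq_top_iff 0).2 rfl

lemma v_pow (x : Kbar) (k : ℕ) : S.v (x ^ k) = k • S.v x := S.val.map_pow x k

lemma v_sub_pos_trans {x y z : Kbar} (hxy : 0 < S.v (x - y)) (hyz : 0 < S.v (y - z)) :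
    0 < S.v (x - z) := by
  rw [← sub_add_sub_cancel x y z]
  exact S.val.map_lt_add hxy hyz

lemma v_algEquiv (σ : Kbar ≃ₐ[K] Kbar) (x : Kbar) : S.v (σ x) = S.v x :=
  S.v_aut_invariant ⊤ (IntermediateField.topEquiv.trans (σ.trans IntermediateField.topEquiv.symm))
    ⟨x, trivial⟩

lemma v_multiset_prod_pos_iff {s : Multiset Kbar} (hs : ∀ x ∈ s, 0 ≤ S.v x) :
    0 < S.v s.prod ↔ ∃ x ∈ s, 0 < S.v x := by
  induction s using Multiset.induction_on with
  | empty => simp [S.v_one]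
  | cons a s ih =>
    have ha := hs a (Multiset.mem_cons_self a s)
    have hs' := fun x hx => hs x (Multiset.mem_cons_of_mem hx)
    simp only [Multiset.prod_cons, S.v_mul, Multiset.mem_cons, exists_eq_or_imp, ← ih hs']
    constructor
    · contrapose!
      exact fun h => add_nonpos h.1 h.2
    · rintro (h | h)
      · exact h.trans_le (le_add_of_nonneg_right (Multiset.prod_induction (0 ≤ S.v ·) s
          (fun x y hx hy => (S.v_mul x y).symm ▸ add_nonneg hx hy) S.v_one.ge hs'))
      · exact h.trans_le (le_add_of_nonneg_left ha)

lemma v_nonneg_of_eval_eq_zero {p : Kbar[X]} (hp : p.Monic) (hc : ∀ i, 0 ≤ S.v (p.coeff i))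
    {y : Kbar} (hy : p.eval y = 0) : 0 ≤ S.v y := by
  -- if `v y < 0`, the term `y ^ natDegree` has strictly smaller valuation than all the others
  by_contra! hneg
  obtain ⟨c, hc'⟩ := WithTop.ne_top_iff_exists.1 hneg.ne_top
  have hc0 : c < 0 := by rw [← hc'] at hneg; exact_mod_cast hneg
  set n := p.natDegree
  have hn : n ≠ 0 := by
    intro h
    rw [hp.natDegree_eq_zero.1 h, eval_one] at hy
    exact one_ne_zero hy
  have hyn : y ^ n = -∑ i ∈ Finset.range n, p.coeff i * y ^ i := by
    rw [eval_eq_sum_range, Finset.sum_range_succ, hp.coeff_natDegree, one_mul] at hy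
    exact eq_neg_of_add_eq_zero_right hy
  have hlt : n • S.v y < S.v (∑ i ∈ Finset.range n, p.coeff i * y ^ i) := by
    refine S.val.map_lt_sum (by rw [← hc']; exact WithTop.coe_ne_top) fun i hi => ?_
    rw [val_apply, S.v_mul, S.v_pow, ← hc', ← WithTop.coe_nsmul, ← WithTop.coe_nsmul]
    refine lt_add_of_nonneg_of_lt (hc i) (WithTop.coe_lt_coe.2 ?_)
    rw [nsmul_eq_mul, nsmul_eq_mul]
    exact mul_lt_mul_of_neg_right (by exact_mod_cast Finset.mem_range.1 hi) hc0
  have hvn := S.v_pow y n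
  rw [hyn, S.v_neg] at hvn
  exact (hvn ▸ hlt).false

instance maximalIdeal_isMaximal : S.maximalIdeal.IsMaximal := by
  refine Ideal.isMaximal_iff.2 ⟨fun h => ?_, fun J x _ hx hxJ => ?_⟩
  · have h1 : (0 : WithTop ℚ) < S.v (algebraMap K Kbar 1) := h
    rw [map_one, S.v_one] at h1
    exact h1.false
  · have hx0 : S.vK x = 0 := le_antisymm (not_lt.1 hx) x.2
    have hinv : (x : K)⁻¹ ∈ S.integers := by
      show 0 ≤ S.v (algebraMap K Kbar (x : K)⁻¹)
      rw [map_inv₀, ← val_apply, S.val.map_inv, val_apply]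
      exact (neg_eq_zero.2 hx0).ge
    have hx0' : (x : K) ≠ 0 := fun h => hx (by
      show (0 : WithTop ℚ) < S.v (algebraMap K Kbar (x : K))
      rw [h, map_zero, v_zero]
      exact WithTop.top_pos)
    have hunit : (⟨_, hinv⟩ : S.integers) * x = 1 := Subtype.ext (inv_mul_cancel₀ hx0')
    exact hunit ▸ J.mul_mem_left _ hxJ

noncomputable instance : Field S.Residue := Ideal.Quotient.field _

lemma reduce_monic {P : S.integers[X]} (hP : P.Monic) : (S.reduce P).Monic := hP.map _

lemma natDegree_reduce {P : S.integers[X]} (hP : P.Monic) :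
    (S.reduce P).natDegree = P.natDegree :=
  hP.natDegree_map _

lemma evalK_eq_eval₂ (P : S.integers[X]) (y : Kbar) :
    S.evalK P y = P.eval₂ ((algebraMap K Kbar).comp S.integers.subtype) y := by
  rw [evalK, aeval_def, eval₂_map]

lemma evalK_mul (P Q : S.integers[X]) (y : Kbar) :
    S.evalK (P * Q) y = S.evalK P y * S.evalK Q y := by
  simp only [evalK, Polynomial.map_mul, map_mul]

lemma v_nonneg_of_evalK_eq_zero {P : S.integers[X]} (hP : P.Monic) {y : Kbar}
    (hy : S.evalK P y = 0) : 0 ≤ S.v y := by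
  refine S.v_nonneg_of_eval_eq_zero ((hP.map S.integers.subtype).map (algebraMap K Kbar))
    (fun i => ?_) ?_
  · rw [coeff_map, coeff_map]
    exact (P.coeff i).2
  · rwa [evalK, aeval_def, eval₂_eq_eval_map] at hy

lemma v_nonneg_of_mem_aroots {P : S.integers[X]} (hP : P.Monic) {y : Kbar}
    (hy : y ∈ (P.map S.integers.subtype).aroots Kbar) : 0 ≤ S.v y :=
  S.v_nonneg_of_evalK_eq_zero hP (mem_aroots.1 hy).2

lemma v_evalK_nonneg (P : S.integers[X]) {y : Kbar} (hy : 0 ≤ S.v y) :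
    0 ≤ S.v (S.evalK P y) := by
  rw [evalK_eq_eval₂, eval₂_eq_sum_range]
  refine S.val.map_le_sum fun i _ => ?_
  rw [val_apply, S.v_mul]
  exact add_nonneg (P.coeff i).2 (S.v_pow y i ▸ nsmul_nonneg hy i)

lemma v_evalK_pos_of_reduce_eq_zero {P : S.integers[X]} (hP : S.reduce P = 0) {y : Kbar}
    (hy : 0 ≤ S.v y) : 0 < S.v (S.evalK P y) := by
  rw [evalK_eq_eval₂, eval₂_eq_sum_range]
  refine S.val.map_lt_sum' WithTop.top_pos fun i _ => ?_
  have hi : P.coeff i ∈ S.maximalIdeal := by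
    rw [← Ideal.Quotient.eq_zero_iff_mem, ← coeff_map]
    show (S.reduce P).coeff i = 0
    rw [hP, coeff_zero]
  rw [val_apply, S.v_mul]
  exact hi.trans_le (le_add_of_nonneg_right (S.v_pow y i ▸ nsmul_nonneg hy i))

lemma v_evalK_sub_pos_of_reduce_eq {P Q : S.integers[X]} (h : S.reduce P = S.reduce Q)
    {y : Kbar} (hy : 0 ≤ S.v y) : 0 < S.v (S.evalK P y - S.evalK Q y) := by
  have h0 : S.reduce (P - Q) = 0 := by rw [reduce, Polynomial.map_sub, sub_eq_zero]; exact h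
  simpa only [evalK, Polynomial.map_sub, map_sub] using S.v_evalK_pos_of_reduce_eq_zero h0 hy

lemma evalK_eq_prod_aroots {P : S.integers[X]} (hP : P.Monic) (y : Kbar) :
    S.evalK P y = (((P.map S.integers.subtype).aroots Kbar).map (y - ·)).prod :=
  (IsAlgClosed.splits _).aeval_eq_prod_aroots_of_monic (hP.map _) y

lemma v_evalK_pos_iff {P : S.integers[X]} (hP : P.Monic) {y : Kbar} (hy : 0 ≤ S.v y) :
    0 < S.v (S.evalK P y) ↔ ∃ a ∈ (P.map S.integers.subtype).aroots Kbar, 0 < S.v (y - a) := by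
  rw [S.evalK_eq_prod_aroots hP, S.v_multiset_prod_pos_iff]
  · simp only [Multiset.mem_map, exists_exists_and_eq_and]
  · intro x hx
    obtain ⟨a, ha, rfl⟩ := Multiset.mem_map.1 hx
    exact S.val.map_le_sub hy (S.v_nonneg_of_mem_aroots hP ha)

lemma not_isCoprime_reduce {P Q : S.integers[X]} {y : Kbar} (hy : 0 ≤ S.v y)
    (hP : 0 < S.v (S.evalK P y)) (hQ : 0 < S.v (S.evalK Q y)) :
    ¬IsCoprime (S.reduce P) (S.reduce Q) := by
  rintro ⟨A, B, hAB⟩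
  obtain ⟨A, rfl⟩ := map_surjective _ Ideal.Quotient.mk_surjective A
  obtain ⟨B, rfl⟩ := map_surjective _ Ideal.Quotient.mk_surjective B
  have hred : S.reduce (A * P + B * Q) = S.reduce 1 := by
    simpa only [reduce, Polynomial.map_add, Polynomial.map_mul, Polynomial.map_one] using hAB
  have hsum : 0 < S.v (S.evalK (A * P + B * Q) y) := by
    simp only [evalK, Polynomial.map_add, Polynomial.map_mul, map_add, map_mul]
    refine S.val.map_lt_add ?_ ?_ <;> rw [val_apply, S.v_mul]
    · exact hP.trans_le (le_add_of_nonneg_left (S.v_evalK_nonneg A hy))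
    · exact hQ.trans_le (le_add_of_nonneg_left (S.v_evalK_nonneg B hy))
  have hone := S.v_sub_pos_trans (S.v_evalK_sub_pos_of_reduce_eq hred.symm hy)
    ((sub_zero (S.evalK (A * P + B * Q) y)).symm ▸ hsum)
  rw [sub_zero, evalK, Polynomial.map_one, map_one, S.v_one] at hone
  exact hone.false

lemma exists_root_lift_of_dvd_reduce {F : S.integers[X]} {q : S.Residue[X]} (hq : q.Monic)
    (hq0 : 0 < q.natDegree) (hqF : q ∣ S.reduce F) :
    ∃ Q : S.integers[X], Q.Monic ∧ S.reduce Q = q ∧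
      ∃ y : Kbar, S.evalK Q y = 0 ∧ 0 < S.v (S.evalK F y) := by
  obtain ⟨w, hw⟩ := hqF
  obtain ⟨Q, hQq, hQdeg, hQ⟩ := lifts_and_natDegree_eq_and_monic
    (mem_lifts_of_surjective Ideal.Quotient.mk_surjective q) hq
  obtain ⟨W, rfl⟩ := map_surjective _ Ideal.Quotient.mk_surjective w
  obtain ⟨y, hy⟩ := IsAlgClosed.exists_aeval_eq_zero Kbar (Q.map S.integers.subtype)
    (by
      rw [degree_eq_natDegree (hQ.map _).ne_zero, hQ.natDegree_map, hQdeg]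
      exact_mod_cast hq0.ne')
  refine ⟨Q, hQ, hQq, y, hy, ?_⟩
  have hFQW : S.reduce F = S.reduce (Q * W) := by rw [hw, reduce, Polynomial.map_mul, hQq]
  have hpos := S.v_evalK_sub_pos_of_reduce_eq hFQW (S.v_nonneg_of_evalK_eq_zero hQ hy)
  rwa [evalK_mul, show S.evalK Q y = 0 from hy, zero_mul, sub_zero] at hpos

lemma exists_algEquiv_v_sub_pos {F : S.integers[X]} (hF : F.Monic) {θ : Kbar}
    (hθ : minpoly K θ = F.map S.integers.subtype) {y : Kbar} (hy : 0 ≤ S.v y)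
    (hFy : 0 < S.v (S.evalK F y)) : ∃ σ : Kbar ≃ₐ[K] Kbar, 0 < S.v (y - σ θ) := by
  obtain ⟨θ', hθ', hyθ'⟩ := (S.v_evalK_pos_iff hF hy).1 hFy
  obtain ⟨σ, rfl⟩ := minpoly.exists_algEquiv_of_root' (Algebra.IsAlgebraic.isAlgebraic θ)
    (hθ ▸ (mem_aroots.1 hθ').2)
  exact ⟨σ, hyθ'⟩

theorem eq_reduce_of_irreducible_dvd {F F₁ : S.integers[X]} (hF : F.Monic) {θ α : Kbar}
    (hθ : minpoly K θ = F.map S.integers.subtype) (hF₁ : F₁.Monic) (hα : S.evalK F₁ α = 0)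
    (hθα : 0 < S.v (θ - α)) (hF₁irr : Irreducible (S.reduce F₁)) {q : S.Residue[X]}
    (hq : q.Monic) (hqirr : Irreducible q) (hqF : q ∣ S.reduce F) : q = S.reduce F₁ := by
  obtain ⟨Q, hQ, rfl, y, hQy, hFy⟩ := S.exists_root_lift_of_dvd_reduce hq hqirr.natDegree_pos hqF
  have hy := S.v_nonneg_of_evalK_eq_zero hQ hQy
  obtain ⟨σ, hyσθ⟩ := S.exists_algEquiv_v_sub_pos hF hθ hy hFy
  have hσα : σ α ∈ (F₁.map S.integers.subtype).aroots Kbar := by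
    refine mem_aroots.2 ⟨(hF₁.map _).ne_zero, ?_⟩
    rw [aeval_algEquiv, AlgHom.comp_apply]
    exact (congrArg σ hα).trans (map_zero σ)
  have hyσα : 0 < S.v (y - σ α) := S.v_sub_pos_trans hyσθ (by rwa [← map_sub, v_algEquiv])
  have hF₁y := (S.v_evalK_pos_iff hF₁ hy).2 ⟨σ α, hσα, hyσα⟩
  have hQy' : 0 < S.v (S.evalK Q y) := by rw [hQy, v_zero]; exact WithTop.top_pos
  exact eq_of_monic_of_associated hq (S.reduce_monic hF₁) <| hqirr.associated_of_dvd hF₁irr <|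
    hqirr.dvd_iff_not_isCoprime.2 (S.not_isCoprime_reduce hy hQy' hF₁y)

namespace OkutsuData

variable {S}
variable {θ : AlgebraicClosure K} {n : ℕ} (D : OkutsuData S θ n)

lemma m_one_le {η : Kbar} (hη : 0 < S.v (θ - η)) :
    D.m 1 ≤ (minpoly K η).natDegree :=
  (D.m_isLeast 1 le_rfl (by omega)).2 ⟨η, rfl, by rwa [Nat.sub_self, D.mu_zero]⟩

lemma mu_one_pos : 0 < D.μ 1 := by
  obtain ⟨η, hη, hθη⟩ := (D.m_isLeast 1 le_rfl (by omega)).1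
  rw [Nat.sub_self, D.mu_zero] at hθη
  exact hθη.trans_le ((D.mu_isGreatest 1 le_rfl (by omega)).2 ⟨η, hη, rfl⟩)

lemma not_v_evalK_pos_of_natDegree_lt {α : Kbar} (hθα : 0 < S.v (θ - α))
    (hα : 0 ≤ S.v α) {g : S.integers[X]} (hg : g.Monic) (hdeg : g.natDegree < D.m 1) :
    ¬0 < S.v (S.evalK g α) := fun hgα => by
  obtain ⟨β, hβ, hαβ⟩ := (S.v_evalK_pos_iff hg hα).1 hgα
  have h₁ := D.m_one_le (S.v_sub_pos_trans hθα hαβ)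
  have h₂ := (natDegree_minpoly_le_of_mem_aroots hβ).trans (natDegree_map_le (p := g))
  omega

theorem irreducible_reduce {α : Kbar} (hθα : 0 < S.v (θ - α)) {F₁ : S.integers[X]}
    (hF₁ : F₁.Monic) (hdeg : F₁.natDegree = D.m 1) (hα : S.evalK F₁ α = 0) :
    Irreducible (S.reduce F₁) := by
  have hα0 := S.v_nonneg_of_evalK_eq_zero hF₁ hα
  refine (S.reduce_monic hF₁).irreducible_iff_natDegree.2 ⟨fun h => ?_, fun f g hf hg hfg => ?_⟩
  · have hF₁1 : F₁ = 1 := hF₁.natDegree_eq_zero.1 (by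
      rw [← S.natDegree_reduce hF₁, h, natDegree_one])
    rw [hF₁1, evalK, Polynomial.map_one, map_one] at hα
    exact one_ne_zero hα
  by_contra! hfg0
  have hsum : f.natDegree + g.natDegree = D.m 1 := by
    rw [← hf.natDegree_mul hg, hfg, S.natDegree_reduce hF₁, hdeg]
  obtain ⟨G, hGf, hGdeg, hG⟩ := lifts_and_natDegree_eq_and_monic
    (mem_lifts_of_surjective Ideal.Quotient.mk_surjective f) hf
  obtain ⟨H, hHg, hHdeg, hH⟩ := lifts_and_natDegree_eq_and_monic
    (mem_lifts_of_surjective Ideal.Quotient.mk_surjective g) hg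
  have hred : S.reduce F₁ = S.reduce (G * H) := by
    rw [← hfg, reduce, Polynomial.map_mul, hGf, hHg]
  have hGH := S.v_evalK_sub_pos_of_reduce_eq hred hα0
  rw [hα, zero_sub, S.v_neg, evalK_mul, S.v_mul] at hGH
  have hG0 := D.not_v_evalK_pos_of_natDegree_lt hθα hα0 hG (by omega)
  have hH0 := D.not_v_evalK_pos_of_natDegree_lt hθα hα0 hH (by omega)
  rw [not_lt] at hG0 hH0
  exact (hGH.trans_le (add_nonpos hG0 hH0)).false

end OkutsuData

end OkutsuSetup

open OkutsuSetup in
/-- Let `F ∈ 𝓞[x]` be monic irreducible of degree `n` with root `θ`,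
of depth `r ≥ 1`, and `[F_1, …, F_r]` an Okutsu frame of `F`.  Then `F_1` is irreducible
modulo `𝔪`, `m_1 ∣ n`, and `F ≡ F_1 ^ (n / m_1) (mod 𝔪)`. -/
theorem okutsu_stmt_2 {K : Type} [Field K] [CharZero K] (S : OkutsuSetup K)
    (F : Polynomial S.integers) (hFmonic : F.Monic)
    (hFirr : Irreducible (F.map S.integers.subtype))
    (n : ℕ) (hFdeg : F.natDegree = n)
    (θ : AlgebraicClosure K) (hθ : S.evalK F θ = 0)
    (D : OkutsuData S θ n) (hr : 1 ≤ D.r)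
    (Fr : ℕ → Polynomial S.integers) (hFr : S.IsFrame D Fr) :
    Irreducible (S.reduce (Fr 1)) ∧ D.m 1 ∣ n ∧
      S.reduce F = S.reduce (Fr 1) ^ (n / D.m 1) := by
  obtain ⟨α, hαdeg, hθα, hF₁α⟩ := hFr 1 le_rfl hr
  have hF₁ : (Fr 1).Monic := monic_of_injective S.integers.subtype_injective
    (hF₁α ▸ minpoly.monic (Algebra.IsIntegral.isIntegral α))
  have hF₁deg : (Fr 1).natDegree = D.m 1 := by
    rw [← natDegree_map_eq_of_injective S.integers.subtype_injective, hF₁α, hαdeg]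
  have hα : S.evalK (Fr 1) α = 0 := by rw [evalK, hF₁α, minpoly.aeval]
  have hθα : 0 < S.v (θ - α) := hθα ▸ D.mu_one_pos
  have hθF : minpoly K θ = F.map S.integers.subtype :=
    (minpoly.eq_of_irreducible_of_monic hFirr hθ (hFmonic.map _)).symm
  have hirr := D.irreducible_reduce hθα hF₁ hF₁deg hα
  obtain ⟨a, ha⟩ := (S.reduce_monic hFmonic).eq_pow_of_forall_irreducible_dvd (S.reduce_monic hF₁)
    fun q hq hqirr hqF => S.eq_reduce_of_irreducible_dvd hFmonic hθF hF₁ hα hθα hirr hq hqirr hqF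
  have hn : n = a * D.m 1 := by
    rw [← hF₁deg, ← S.natDegree_reduce hF₁, ← natDegree_pow, ← ha, S.natDegree_reduce hFmonic,
      hFdeg]
  have hm : 0 < D.m 1 := hαdeg ▸ minpoly.natDegree_pos (Algebra.IsIntegral.isIntegral α)
  exact ⟨hirr, ⟨a, hn.trans (mul_comm _ _)⟩, by rw [Nat.div_eq_of_eq_mul_left hm hn, ha]⟩
end
end

section
/- Let F(x) ∈ 𝓞[x] be a monic irreducible polynomial with root θ ∈ K̄, with Okutsu invariants m_i, μ_i and depth r. Fix 1 ≤ i ≤ r+1, and let α, η ∈ K̄ be algebraic integers satisfying v(θ − α) > μ_{i−1}, v(θ − η) > μ_{i−1}, and deg_K α = m_i. Then the ramification index e(K(α)/K) divides the ramification index e(K(η)/K). -/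
open Polynomial

noncomputable section

/-!
Write `x ∈ K(α)` as `g(α)` with `deg g < m_i`. Every root `β` of `g` has `[K(β):K] < m_i`, so
`v(θ - β) ≤ μ_{i-1}` by minimality of `m_i`; as `α` and `η` are strictly closer to `θ`,
`v(α - β) = v(θ - β) = v(η - β)`, hence `v(g(α)) = v(g(η))`. So `v(K(α)*) ⊆ v(K(η)*)`, and since
the denominators `e` with `v(E*) ⊆ (1/e)ℤ` are closed under `gcd`, `e(K(α)/K) ∣ e(K(η)/K)`.
-/

open scoped IntermediateField

lemma Rat.exists_eq_intCast_div_gcd {q : ℚ} {d e : ℕ} (hd : 0 < d) (he : 0 < e)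
    (hqd : ∃ k : ℤ, q = k / d) (hqe : ∃ k : ℤ, q = k / e) :
    ∃ k : ℤ, q = k / (d.gcd e : ℕ) := by
  obtain ⟨k₁, rfl⟩ := hqd
  obtain ⟨k₂, hk₂⟩ := hqe
  have hd0 : (d : ℚ) ≠ 0 := by positivity
  have he0 : (e : ℚ) ≠ 0 := by positivity
  have hg0 : ((d.gcd e : ℕ) : ℚ) ≠ 0 := by positivity
  have hcross : (k₁ : ℚ) * e = k₂ * d := (div_eq_div_iff hd0 he0).mp hk₂
  have hbez : ((d.gcd e : ℕ) : ℚ) = d * Int.gcdA d e + e * Int.gcdB d e := by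
    exact_mod_cast Int.gcd_eq_gcd_ab d e
  refine ⟨k₁ * Int.gcdA d e + k₂ * Int.gcdB d e, ?_⟩
  rw [div_eq_div_iff hd0 hg0]
  push_cast
  linear_combination (k₁ : ℚ) * hbez + (Int.gcdB d e : ℚ) * hcross

lemma IntermediateField.exists_eq_aeval_of_mem_adjoin_simple {F L : Type*} [Field F] [Field L]
    [Algebra F L] {α : L} (hα : IsIntegral F α) {x : L} (hx : x ∈ F⟮α⟯) :
    ∃ g : F[X], g.natDegree < (minpoly F α).natDegree ∧ x = aeval α g := by
  obtain ⟨g, hg, hxg⟩ := (adjoin.powerBasis hα).exists_eq_aeval ⟨x, hx⟩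
  exact ⟨g, hg, by simpa [aeval_algebraMap_apply] using congrArg Subtype.val hxg⟩

lemma IntermediateField.aeval_mem_adjoin_simple {F L : Type*} [Field F] [Field L]
    [Algebra F L] (α : L) (g : F[X]) : aeval α g ∈ F⟮α⟯ :=
  algebra_adjoin_le_adjoin F {α} (aeval_mem_adjoin_singleton F α)

namespace OkutsuSetup

variable {K : Type} [Field K] [CharZero K] (S : OkutsuSetup K)

lemma v_add_eq_of_lt {a b : AlgebraicClosure K} (h : S.v b < S.v a) :
    S.v (a + b) = S.v b := by
  refine le_antisymm ?_ (min_eq_right h.le ▸ S.v_min_le_add a b)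
  by_contra! hlt
  have hb := S.v_min_le_add (a + b) (-a)
  rw [add_neg_cancel_comm, S.v_neg] at hb
  exact hb.not_gt (lt_min hlt h)

lemma v_sub_eq_of_lt {θ α β : AlgebraicClosure K} (h : S.v (θ - β) < S.v (θ - α)) :
    S.v (α - β) = S.v (θ - β) := by
  rw [show α - β = -(θ - α) + (θ - β) by ring]
  exact S.v_add_eq_of_lt (by rwa [S.v_neg])

lemma v_multiset_prod (s : Multiset (AlgebraicClosure K)) :
    S.v s.prod = (s.map S.v).sum := by
  induction s using Multiset.induction with
  | empty => simpa using S.v_one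
  | cons a s ih => simp [S.v_mul, ih]

lemma v_aeval_eq_of_forall_mem_aroots {g : K[X]} {α η : AlgebraicClosure K}
    (h : ∀ β ∈ g.aroots (AlgebraicClosure K), S.v (α - β) = S.v (η - β)) :
    S.v (aeval α g) = S.v (aeval η g) := by
  have hg : (g.map (algebraMap K (AlgebraicClosure K))).Splits := IsAlgClosed.splits _
  rw [hg.aeval_eq_prod_aroots α, hg.aeval_eq_prod_aroots η, S.v_mul, S.v_mul,
    S.v_multiset_prod, S.v_multiset_prod, Multiset.map_map, Multiset.map_map]
  exact congrArg (_ + Multiset.sum ·) (Multiset.map_congr rfl h)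

def ValuesIn (E : IntermediateField K (AlgebraicClosure K)) (e : ℕ) : Prop :=
  ∀ x ∈ E, x ≠ 0 → ∃ k : ℤ, S.v x = (((k : ℚ) / (e : ℚ) : ℚ) : WithTop ℚ)

lemma ramIdx_eq_sInf (E : IntermediateField K (AlgebraicClosure K)) :
    S.ramIdx E = sInf {e | 0 < e ∧ S.ValuesIn E e} := rfl

lemma valuesIn_gcd {E : IntermediateField K (AlgebraicClosure K)} {d e : ℕ}
    (hd : 0 < d) (he : 0 < e) (hdE : S.ValuesIn E d) (heE : S.ValuesIn E e) :
    S.ValuesIn E (d.gcd e) := by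
  intro x hx hx0
  obtain ⟨k₁, h₁⟩ := hdE x hx hx0
  obtain ⟨k₂, h₂⟩ := heE x hx hx0
  obtain ⟨k, hk⟩ := Rat.exists_eq_intCast_div_gcd (q := k₁ / d) hd he ⟨k₁, rfl⟩
    ⟨k₂, WithTop.coe_injective (h₁.symm.trans h₂)⟩
  exact ⟨k, h₁.trans (congrArg _ hk)⟩

lemma ramIdx_dvd_of_valuesIn {E : IntermediateField K (AlgebraicClosure K)} {e : ℕ}
    (he : 0 < e) (heE : S.ValuesIn E e) : S.ramIdx E ∣ e := by
  rw [ramIdx_eq_sInf]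
  set d := sInf {e | 0 < e ∧ S.ValuesIn E e}
  obtain ⟨hd, hdE⟩ : 0 < d ∧ S.ValuesIn E d :=
    Nat.sInf_mem (s := {e | 0 < e ∧ S.ValuesIn E e}) ⟨e, he, heE⟩
  have hd_le : d ≤ d.gcd e :=
    Nat.sInf_le ⟨Nat.gcd_pos_of_pos_left e hd, S.valuesIn_gcd hd he hdE heE⟩
  rw [← le_antisymm (Nat.gcd_le_left e hd) hd_le]
  exact Nat.gcd_dvd_right d e

lemma ramIdx_dvd_ramIdx {E E' : IntermediateField K (AlgebraicClosure K)}
    (h : ∀ x ∈ E, x ≠ 0 → ∃ y ∈ E', y ≠ 0 ∧ S.v y = S.v x) :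
    S.ramIdx E ∣ S.ramIdx E' := by
  obtain h0 | hpos := Nat.eq_zero_or_pos (S.ramIdx E')
  · rw [h0]
    exact dvd_zero _
  obtain ⟨-, hE'⟩ := Nat.sInf_mem (Nat.nonempty_of_pos_sInf hpos)
  refine S.ramIdx_dvd_of_valuesIn hpos fun x hx hx0 => ?_
  obtain ⟨y, hy, hy0, hyx⟩ := h x hx hx0
  exact hyx ▸ hE' y hy hy0

variable {S} {θ : AlgebraicClosure K} {n : ℕ} (D : OkutsuData S θ n) {i : ℕ}

lemma OkutsuData.v_sub_le_of_natDegree_lt (hi1 : 1 ≤ i) (hi2 : i ≤ D.r + 1)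
    {β : AlgebraicClosure K} (h : (minpoly K β).natDegree < D.m i) :
    S.v (θ - β) ≤ D.μ (i - 1) := by
  by_contra! hlt
  exact h.not_ge ((D.m_isLeast i hi1 hi2).2 ⟨β, rfl, hlt⟩)

lemma OkutsuData.v_aeval_eq (hi1 : 1 ≤ i) (hi2 : i ≤ D.r + 1) {α η : AlgebraicClosure K}
    (hαv : D.μ (i - 1) < S.v (θ - α)) (hηv : D.μ (i - 1) < S.v (θ - η))
    {g : K[X]} (hg : g ≠ 0) (hdeg : g.natDegree < D.m i) :
    S.v (aeval α g) = S.v (aeval η g) := by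
  refine S.v_aeval_eq_of_forall_mem_aroots fun β hβ => ?_
  have hβdeg : (minpoly K β).natDegree < D.m i :=
    (natDegree_le_of_dvd (minpoly.dvd K β (mem_aroots.mp hβ).2) hg).trans_lt hdeg
  have hβv := D.v_sub_le_of_natDegree_lt hi1 hi2 hβdeg
  rw [S.v_sub_eq_of_lt (hβv.trans_lt hαv), S.v_sub_eq_of_lt (hβv.trans_lt hηv)]

lemma OkutsuData.exists_v_eq_of_mem_adjoin (hi1 : 1 ≤ i) (hi2 : i ≤ D.r + 1)
    {α η : AlgebraicClosure K}
    (hαv : D.μ (i - 1) < S.v (θ - α)) (hηv : D.μ (i - 1) < S.v (θ - η))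
    (hαdeg : (minpoly K α).natDegree = D.m i) :
    ∀ x ∈ K⟮α⟯, x ≠ 0 → ∃ y ∈ K⟮η⟯, y ≠ 0 ∧ S.v y = S.v x := by
  intro x hx hx0
  obtain ⟨g, hdeg, rfl⟩ :=
    IntermediateField.exists_eq_aeval_of_mem_adjoin_simple (Algebra.IsIntegral.isIntegral α) hx
  have hg : g ≠ 0 := by
    rintro rfl
    exact hx0 (map_zero _)
  have hv := D.v_aeval_eq hi1 hi2 hαv hηv hg (hαdeg ▸ hdeg)
  refine ⟨aeval η g, IntermediateField.aeval_mem_adjoin_simple η g, fun hη0 => hx0 ?_, hv.symm⟩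
  rw [← S.v_eq_top_iff, hv, hη0, S.v_eq_top_iff]

end OkutsuSetup

open OkutsuSetup in
theorem okutsu_stmt_6_general {K : Type} [Field K] [CharZero K] (S : OkutsuSetup K)
    (n : ℕ) (θ : AlgebraicClosure K) (D : OkutsuData S θ n)
    (i : ℕ) (hi1 : 1 ≤ i) (hi2 : i ≤ D.r + 1)
    (α η : AlgebraicClosure K)
    (hαv : D.μ (i - 1) < S.v (θ - α)) (hηv : D.μ (i - 1) < S.v (θ - η))
    (hαdeg : (minpoly K α).natDegree = D.m i) :
    S.ramIdx (IntermediateField.adjoin K {α}) ∣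
      S.ramIdx (IntermediateField.adjoin K {η}) :=
  S.ramIdx_dvd_ramIdx (D.exists_v_eq_of_mem_adjoin hi1 hi2 hαv hηv hαdeg)

open OkutsuSetup in
/-- Let `F ∈ 𝓞[x]` be monic irreducible with root `θ`, with Okutsu
invariants `m_i, μ_i` and depth `r`.  Fix `1 ≤ i ≤ r + 1` and let `α, η ∈ K̄` be
algebraic integers with `v(θ - α) > μ_{i-1}`, `v(θ - η) > μ_{i-1}` and `[K(α):K] = m_i`.
Then `e(K(α)/K)` divides `e(K(η)/K)`. -/
theorem okutsu_stmt_6 {K : Type} [Field K] [CharZero K] (S : OkutsuSetup K)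
    (F : Polynomial S.integers) (hFmonic : F.Monic)
    (hFirr : Irreducible (F.map S.integers.subtype))
    (n : ℕ) (hFdeg : F.natDegree = n)
    (θ : AlgebraicClosure K) (hθ : S.evalK F θ = 0)
    (D : OkutsuData S θ n)
    (i : ℕ) (hi1 : 1 ≤ i) (hi2 : i ≤ D.r + 1)
    (α η : AlgebraicClosure K) (hαint : 0 ≤ S.v α) (hηint : 0 ≤ S.v η)
    (hαv : D.μ (i - 1) < S.v (θ - α)) (hηv : D.μ (i - 1) < S.v (θ - η))
    (hαdeg : (minpoly K α).natDegree = D.m i) :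
    S.ramIdx (IntermediateField.adjoin K {α}) ∣
      S.ramIdx (IntermediateField.adjoin K {η}) :=
  okutsu_stmt_6_general S n θ D i hi1 hi2 α η hαv hηv hαdeg
end
end
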